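/- Let (γ_k)_{k≥0} be a sequence of real numbers, let T be a linear operator on ℝ[x] satisfying T[P_k] = γ_k·P_k for all k, and suppose (S_k)_{k≥0} is a sequence of real polynomials such that T[p] = Σ_{k≥0} S_k(x)·p^{(k)}(x) for every p ∈ ℝ[x]. Then for every natural number m, S_{2m}(0) = (1/(2·4^m·m!))·Σ_{k=0}^{m} C(m,k)·(4k+1)·γ_{2k}·(−1)^k / (k+1/2)_{m+1}. -/

import Mathlib

open Polynomial Finset

/-- The `k`-th Legendre polynomial, via Rodrigues' formula. -/
noncomputable def legendreP (k : ℕ) : Polynomial ℝ :=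
  (1 / (2 ^ k * (Nat.factorial k) : ℝ)) • (Polynomial.derivative^[k] ((X ^ 2 - 1) ^ k))

/-- The Pochhammer symbol (rising factorial) `(α)_k`. -/
noncomputable def poch (α : ℝ) (k : ℕ) : ℝ := ∏ i ∈ Finset.range k, (α + i)

/-!
Apply `T` to `P_{2n}` and evaluate at `0`. As `P_{2n}` is even, only the even derivatives
survive, and `B n j := P_{2n}^{(2j)}(0)` (`legendreDerivAtZero`) vanishes for `j > n`, so
`γ_{2n} B n 0 = ∑_{j ≤ n} S_{2j}(0) B n j`: a lower triangular system with nonzero diagonal,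
which determines the values `S_{2j}(0)`. The claimed values `∑_k c j k γ_{2k}`, with `c` the
`inversionCoeff`, solve it: for `k < m` the sum `∑_j B m j c j k` telescopes to `0` (both
factors satisfy first-order recurrences in `j`), and for `k = m` the only term
`B m m c m m = B m 0` is Legendre's duplication formula for the Pochhammer symbol at `m + 1/2`.
-/

open scoped Nat

section CommRing

variable {R : Type*} [CommRing R]

lemma cast_choose_succ_right_mul (n k : ℕ) :
    (n.choose (k + 1) : R) * (k + 1) = n.choose k * (n - k) := by
  rcases le_or_gt k n with h | h
  · have := congrArg (Nat.cast : ℕ → R) (Nat.choose_succ_right_eq n k)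
    push_cast [h] at this
    exact this
  · simp [Nat.choose_eq_zero_of_lt h, Nat.choose_eq_zero_of_lt (h.trans (Nat.lt_succ_self k))]

lemma cast_succ_choose_mul (n k : ℕ) :
    ((n + 1).choose k : R) * (n + 1 - k) = n.choose k * (n + 1) := by
  rcases le_or_gt k (n + 1) with h | h
  · have := congrArg (Nat.cast : ℕ → R) (Nat.choose_mul_succ_eq n k)
    push_cast [h] at this
    exact this.symm
  · simp [Nat.choose_eq_zero_of_lt h, Nat.choose_eq_zero_of_lt (Nat.lt_of_succ_lt h)]

lemma X_sq_sub_one_pow_eq_expand (n : ℕ) :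
    (X ^ 2 - 1 : R[X]) ^ n = expand R 2 ((X + C (-1)) ^ n) := by
  simp [sub_eq_add_neg]

lemma coeff_X_sq_sub_one_pow_two_mul (n i : ℕ) :
    ((X ^ 2 - 1 : R[X]) ^ n).coeff (2 * i) = (-1) ^ (n + i) * n.choose i := by
  rw [X_sq_sub_one_pow_eq_expand, coeff_expand_mul' two_pos, coeff_X_add_C_pow]
  rcases le_or_gt i n with h | h
  · obtain ⟨d, rfl⟩ := Nat.exists_eq_add_of_le h
    rw [Nat.add_sub_cancel_left, show i + d + i = d + 2 * i by ring, pow_add, pow_mul]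
    simp
  · simp [Nat.choose_eq_zero_of_lt h]

lemma coeff_X_sq_sub_one_pow_two_mul_add_one (n i : ℕ) :
    ((X ^ 2 - 1 : R[X]) ^ n).coeff (2 * i + 1) = 0 := by
  rw [X_sq_sub_one_pow_eq_expand, coeff_expand two_pos, if_neg (by omega)]

lemma iterate_derivative_eval_zero (p : R[X]) (k : ℕ) :
    (derivative^[k] p).eval 0 = k ! * p.coeff k := by
  rw [← coeff_zero_eq_eval_zero, coeff_iterate_derivative, zero_add, Nat.descFactorial_self,
    nsmul_eq_mul]

end CommRing

lemma natDegree_iterate_derivative_eq {K : Type*} [Field K] [CharZero K] (p : K[X]) (k : ℕ) :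
    (derivative^[k] p).natDegree = p.natDegree - k := by
  induction k with
  | zero => rfl
  | succ k ih => rw [Function.iterate_succ_apply', natDegree_derivative, ih, Nat.sub_sub]

lemma sum_range_two_mul_add_one {M : Type*} [AddCommMonoid M] (f : ℕ → M) (n : ℕ) :
    ∑ i ∈ range (2 * n + 1), f i =
      ∑ j ∈ range (n + 1), f (2 * j) + ∑ j ∈ range n, f (2 * j + 1) := by
  induction n with
  | zero => simp
  | succ n ih =>
    rw [show 2 * (n + 1) + 1 = 2 * n + 1 + 1 + 1 by ring, sum_range_succ, sum_range_succ, ih,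
      sum_range_succ (fun j ↦ f (2 * j)) (n + 1), sum_range_succ (fun j ↦ f (2 * j + 1)) n,
      show 2 * (n + 1) = 2 * n + 1 + 1 by ring]
    abel

lemma eq_of_forall_sum_range_mul_eq {R : Type*} [CommRing R] [IsDomain R] {B : ℕ → ℕ → R}
    (hB : ∀ n, B n n ≠ 0) {a b : ℕ → R}
    (h : ∀ n, ∑ j ∈ range (n + 1), a j * B n j = ∑ j ∈ range (n + 1), b j * B n j) :
    a = b := by
  funext n
  induction n using Nat.strong_induction_on with
  | _ n ih =>
    have hn := h n
    rw [sum_range_succ, sum_range_succ,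
      sum_congr rfl fun j hj ↦ by rw [ih j (mem_range.1 hj)]] at hn
    exact mul_right_cancel₀ (hB n) (add_left_cancel hn)

lemma poch_succ (α : ℝ) (k : ℕ) : poch α (k + 1) = poch α k * (α + k) :=
  prod_range_succ _ _

lemma poch_pos {α : ℝ} (hα : 0 < α) (k : ℕ) : 0 < poch α k :=
  prod_pos fun _ _ ↦ by positivity

lemma factorial_mul_poch (a n : ℕ) : (a ! : ℝ) * poch (a + 1) n = (a + n)! := by
  induction n with
  | zero => simp [poch]
  | succ n ih =>
    rw [poch_succ, ← add_assoc, Nat.factorial_succ, ← mul_assoc, ih]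
    push_cast
    ring

lemma four_pow_mul_poch_mul_poch_add_half (x : ℝ) (n : ℕ) :
    4 ^ n * poch x n * poch (x + 1 / 2) n = poch (2 * x) (2 * n) := by
  induction n with
  | zero => simp [poch]
  | succ n ih =>
    rw [poch_succ, poch_succ, mul_add_one, poch_succ, poch_succ, ← ih]
    push_cast
    ring

lemma natDegree_legendreP (n : ℕ) : (legendreP n).natDegree = n := by
  have hquad : (X ^ 2 - 1 : ℝ[X]).natDegree = 2 := by
    simpa using natDegree_X_pow_sub_C (n := 2) (r := (1 : ℝ))
  rw [legendreP, natDegree_smul _ (by positivity), natDegree_iterate_derivative_eq, natDegree_pow,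
    hquad]
  omega

lemma iterate_derivative_legendreP_eval_zero (n r : ℕ) :
    (derivative^[r] (legendreP n)).eval 0 =
      (r + n)! / (2 ^ n * n !) * ((X ^ 2 - 1 : ℝ[X]) ^ n).coeff (r + n) := by
  rw [legendreP, iterate_derivative_smul, ← Function.iterate_add_apply, eval_smul,
    iterate_derivative_eval_zero, smul_eq_mul]
  ring

noncomputable def legendreDerivAtZero (n j : ℕ) : ℝ :=
  (2 * (j + n))! / (4 ^ n * (2 * n)!) * ((-1) ^ (n + j) * (2 * n).choose (j + n))

lemma iterate_derivative_legendreP_two_mul_eval_zero (n j : ℕ) :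
    (derivative^[2 * j] (legendreP (2 * n))).eval 0 = legendreDerivAtZero n j := by
  rw [iterate_derivative_legendreP_eval_zero, show 2 * j + 2 * n = 2 * (j + n) by ring,
    coeff_X_sq_sub_one_pow_two_mul, legendreDerivAtZero, pow_add, pow_mul, pow_mul, neg_one_sq,
    one_pow, one_mul, add_comm n j]
  norm_num

lemma iterate_derivative_legendreP_two_mul_eval_zero_odd (n j : ℕ) :
    (derivative^[2 * j + 1] (legendreP (2 * n))).eval 0 = 0 := by
  rw [iterate_derivative_legendreP_eval_zero, show 2 * j + 1 + 2 * n = 2 * (j + n) + 1 by ring,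
    coeff_X_sq_sub_one_pow_two_mul_add_one, mul_zero]

lemma legendreDerivAtZero_succ (n j : ℕ) :
    legendreDerivAtZero n (j + 1) =
      -2 * (2 * n + 2 * j + 1) * (n - j) * legendreDerivAtZero n j := by
  have hchoose := cast_choose_succ_right_mul (R := ℝ) (2 * n) (j + n)
  have hfac : ((2 * (j + n + 1))! : ℝ) =
      (2 * j + 2 * n + 2) * (2 * j + 2 * n + 1) * (2 * (j + n))! := by
    rw [show 2 * (j + n + 1) = 2 * (j + n) + 1 + 1 by ring, Nat.factorial_succ, Nat.factorial_succ]
    push_cast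
    ring
  refine mul_right_cancel₀ (show (j + n + 1 : ℝ) ≠ 0 by positivity) ?_
  unfold legendreDerivAtZero
  rw [show j + 1 + n = j + n + 1 by ring, hfac, ← add_assoc, pow_succ]
  push_cast at hchoose
  linear_combination -(2 * j + 2 * n + 2) * (2 * j + 2 * n + 1) * (-1) ^ (n + j) *
    ((2 * (j + n))! / (4 ^ n * (2 * n)!) : ℝ) * hchoose

lemma legendreDerivAtZero_self_ne_zero (n : ℕ) : legendreDerivAtZero n n ≠ 0 := by
  simp [legendreDerivAtZero, ← two_mul, Nat.factorial_ne_zero]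

noncomputable def inversionCoeff (j k : ℕ) : ℝ :=
  1 / (2 * 4 ^ j * j !) * (j.choose k * (4 * k + 1) * (-1) ^ k / poch (k + 1 / 2) (j + 1))

lemma inversionCoeff_eq_zero_of_lt {j k : ℕ} (h : j < k) : inversionCoeff j k = 0 := by
  simp [inversionCoeff, Nat.choose_eq_zero_of_lt h]

lemma inversionCoeff_succ_mul (j k : ℕ) :
    inversionCoeff (j + 1) k * (2 * (j + 1 - k) * (2 * j + 2 * k + 3)) = inversionCoeff j k := by
  have hchoose := cast_succ_choose_mul (R := ℝ) j k
  have hpoch := (poch_pos (show (0 : ℝ) < k + 1 / 2 by positivity) (j + 1)).ne'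
  unfold inversionCoeff
  rw [poch_succ, Nat.factorial_succ, pow_succ]
  generalize poch (k + 1 / 2) (j + 1) = P at hpoch ⊢
  push_cast
  field_simp
  linear_combination 4 * (2 * j + 2 * k + 3) * hchoose

lemma sum_legendreDerivAtZero_mul_inversionCoeff_of_lt {m k : ℕ} (hk : k < m) :
    ∑ j ∈ range (m + 1), legendreDerivAtZero m j * inversionCoeff j k = 0 := by
  -- Gosper's certificate for the summand: it vanishes at both ends of the range.
  set G : ℕ → ℝ := fun j ↦
    -((j - k) * (2 * j + 2 * k + 1)) * (legendreDerivAtZero m j * inversionCoeff j k) with hG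
  have hstep : ∀ j, G (j + 1) - G j =
      (m - k) * (2 * m + 2 * k + 1) * (legendreDerivAtZero m j * inversionCoeff j k) := by
    intro j
    have hB := legendreDerivAtZero_succ m j
    have hc := inversionCoeff_succ_mul j k
    simp only [hG]
    push_cast
    linear_combination (-(1 / 2) * legendreDerivAtZero m (j + 1)) * hc
      + (-(1 / 2) * inversionCoeff j k) * hB
  have htop : G (m + 1) = 0 := by
    simp [hG, legendreDerivAtZero_succ m m]
  have hbot : G 0 = 0 := by
    rcases Nat.eq_zero_or_pos k with rfl | hk0
    · simp [hG]
    · simp [hG, inversionCoeff_eq_zero_of_lt hk0]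
  have hD : ((m - k) * (2 * m + 2 * k + 1) : ℝ) ≠ 0 := by
    have : (k : ℝ) < m := by exact_mod_cast hk
    exact mul_ne_zero (by linarith) (by positivity)
  refine (mul_eq_zero.1 ?_).resolve_left hD
  rw [mul_sum, ← sum_congr rfl fun j _ ↦ hstep j, sum_range_sub, htop, hbot, sub_zero]

lemma factorial_mul_factorial_eq_poch_half (m : ℕ) :
    ((4 * m + 1)! : ℝ) * m ! = 2 * 4 ^ m * poch (m + 1 / 2) (m + 1) * (2 * m)! ^ 2 := by
  have hdup := four_pow_mul_poch_mul_poch_add_half (m + 1 / 2) (m + 1)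
  have hlow := factorial_mul_poch m (m + 1)
  have hhigh := factorial_mul_poch (2 * m) (2 * m + 2)
  rw [show (m : ℝ) + 1 / 2 + 1 / 2 = m + 1 by ring,
    show (2 : ℝ) * (m + 1 / 2) = (2 * m : ℕ) + 1 by push_cast; ring,
    show 2 * (m + 1) = 2 * m + 2 by ring] at hdup
  rw [show m + (m + 1) = 2 * m + 1 by ring] at hlow
  rw [show 2 * m + (2 * m + 2) = 4 * m + 1 + 1 by ring, Nat.factorial_succ] at hhigh
  have hodd : ((2 * m + 1)! : ℝ) = (2 * m + 1) * (2 * m)! := by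
    rw [Nat.factorial_succ]; push_cast; ring
  refine mul_left_cancel₀ (show (2 * (2 * m + 1) : ℝ) ≠ 0 by positivity) ?_
  push_cast at hhigh hdup
  linear_combination (-(2 * m)! * m ! : ℝ) * hdup
    + 4 ^ (m + 1) * poch (m + 1 / 2) (m + 1) * (2 * m)! * hlow - (m ! : ℝ) * hhigh
    + 4 ^ (m + 1) * poch (m + 1 / 2) (m + 1) * (2 * m)! * hodd

lemma legendreDerivAtZero_self_mul_inversionCoeff_self (m : ℕ) :
    legendreDerivAtZero m m * inversionCoeff m m = legendreDerivAtZero m 0 := by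
  have key := factorial_mul_factorial_eq_poch_half m
  have hchoose : ((2 * m).choose m : ℝ) * m ! * m ! = (2 * m)! := by
    rw [two_mul, Nat.cast_add_choose]
    field_simp
  have h4m : ((4 * m + 1)! : ℝ) = (4 * m + 1) * (2 * (2 * m))! := by
    rw [show 2 * (2 * m) = 4 * m by ring, Nat.factorial_succ]; push_cast; ring
  have hP := (poch_pos (show (0 : ℝ) < m + 1 / 2 by positivity) (m + 1)).ne'
  simp only [legendreDerivAtZero, inversionCoeff, add_zero, zero_add, ← two_mul,
    Nat.choose_self, pow_mul, neg_one_sq, one_pow, Nat.cast_one, one_mul]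
  rw [h4m] at key
  generalize poch (m + 1 / 2) (m + 1) = P at hP key ⊢
  field_simp
  refine mul_right_cancel₀ (show (m ! : ℝ) ≠ 0 by positivity) ?_
  linear_combination key - 2 * 4 ^ m * P * (2 * m)! * hchoose

lemma sum_legendreDerivAtZero_mul_inversionCoeff {m k : ℕ} (hk : k ≤ m) :
    ∑ j ∈ range (m + 1), legendreDerivAtZero m j * inversionCoeff j k =
      if k = m then legendreDerivAtZero m 0 else 0 := by
  split_ifs with h
  · subst h
    rw [sum_range_succ, sum_eq_zero fun j hj ↦ by
      rw [inversionCoeff_eq_zero_of_lt (mem_range.1 hj), mul_zero], zero_add,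
      legendreDerivAtZero_self_mul_inversionCoeff_self]
  · exact sum_legendreDerivAtZero_mul_inversionCoeff_of_lt (lt_of_le_of_ne hk h)

lemma sum_sum_inversionCoeff_mul_legendreDerivAtZero (g : ℕ → ℝ) (m : ℕ) :
    ∑ j ∈ range (m + 1),
        (∑ k ∈ range (j + 1), inversionCoeff j k * g k) * legendreDerivAtZero m j =
      g m * legendreDerivAtZero m 0 := by
  have hextend : ∀ j ∈ range (m + 1), ∑ k ∈ range (j + 1), inversionCoeff j k * g k =
      ∑ k ∈ range (m + 1), inversionCoeff j k * g k := by
    intro j hj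
    refine sum_subset (range_subset_range.2 (by simpa using hj)) fun k _ hk ↦ ?_
    rw [inversionCoeff_eq_zero_of_lt (by simpa using hk), zero_mul]
  calc _ = ∑ k ∈ range (m + 1),
        g k * ∑ j ∈ range (m + 1), legendreDerivAtZero m j * inversionCoeff j k := by
        rw [sum_congr rfl fun j hj ↦ by rw [hextend j hj]]
        simp only [sum_mul, mul_sum]
        rw [sum_comm]
        exact sum_congr rfl fun _ _ ↦ sum_congr rfl fun _ _ ↦ by ring
    _ = ∑ k ∈ range (m + 1), g k * if k = m then legendreDerivAtZero m 0 else 0 :=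
        sum_congr rfl fun k hk ↦ by
          rw [sum_legendreDerivAtZero_mul_inversionCoeff (Nat.lt_succ_iff.1 (mem_range.1 hk))]
    _ = g m * legendreDerivAtZero m 0 := by simp

lemma sum_eval_zero_mul_legendreDerivAtZero {T : ℝ[X] →ₗ[ℝ] ℝ[X]} {S : ℕ → ℝ[X]}
    (hT : ∀ p : ℝ[X], T p = ∑ k ∈ range (p.natDegree + 1), S k * derivative^[k] p)
    {n : ℕ} {c : ℝ} (hP : T (legendreP (2 * n)) = c • legendreP (2 * n)) :
    ∑ j ∈ range (n + 1), (S (2 * j)).eval 0 * legendreDerivAtZero n j =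
      c * legendreDerivAtZero n 0 := by
  have h0 : (legendreP (2 * n)).eval 0 = legendreDerivAtZero n 0 :=
    iterate_derivative_legendreP_two_mul_eval_zero n 0
  have h := congrArg (eval 0) ((hT _).symm.trans hP)
  rw [natDegree_legendreP, eval_finsetSum, sum_range_two_mul_add_one, eval_smul, smul_eq_mul,
    h0] at h
  simpa only [eval_mul, iterate_derivative_legendreP_two_mul_eval_zero,
    iterate_derivative_legendreP_two_mul_eval_zero_odd, mul_zero, sum_const_zero, add_zero] using h

theorem stmt2 (γ : ℕ → ℝ) (T : Polynomial ℝ →ₗ[ℝ] Polynomial ℝ)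
    (hTP : ∀ k : ℕ, T (legendreP k) = γ k • legendreP k)
    (S : ℕ → Polynomial ℝ)
    (hT : ∀ p : Polynomial ℝ,
      T p = ∑ k ∈ Finset.range (p.natDegree + 1), S k * (Polynomial.derivative)^[k] p)
    (m : ℕ) :
    (S (2 * m)).eval 0 =
      1 / (2 * 4 ^ m * (Nat.factorial m)) *
        ∑ k ∈ Finset.range (m + 1),
          (m.choose k : ℝ) * (4 * (k : ℝ) + 1) * γ (2 * k) * (-1) ^ k /
            poch ((k : ℝ) + 1 / 2) (m + 1) := by
  have hsolve : (fun j ↦ (S (2 * j)).eval 0) =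
      fun j ↦ ∑ k ∈ range (j + 1), inversionCoeff j k * γ (2 * k) :=
    eq_of_forall_sum_range_mul_eq legendreDerivAtZero_self_ne_zero fun n ↦ by
      rw [sum_eval_zero_mul_legendreDerivAtZero hT (hTP (2 * n)),
        sum_sum_inversionCoeff_mul_legendreDerivAtZero (fun k ↦ γ (2 * k))]
  rw [congrFun hsolve m, mul_sum]
  exact sum_congr rfl fun k _ ↦ by unfold inversionCoeff; ring
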